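/- arXiv:2210.02198 — 2 statements merged into one kernel-verified Lean document; each statement's English description precedes it below -/
import Mathlib

section
/- The function t ↦ p_δ(t, λ) + (ρ/2) t² is convex on ℝ whenever ρ > 1/δ. -/
noncomputable def mcp (δ lam t : ℝ) : ℝ :=
  lam * ∫ x in (0:ℝ)..|t|, max (1 - x / (δ * lam)) 0

/-! Integrating the MCP derivative gives `mcp δ lam t = lam |t| - t² / (2δ) + (|t| - δ lam)₊² / (2δ)`.
The concave part `-t² / (2δ)` is absorbed by `ρ t² / 2` since `ρ > 1/δ`, and the remaining
terms `lam |t|` and `(|t| - δ lam)₊²` are convex. -/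

open Set intervalIntegral

lemma integral_max_one_sub_div_of_le {c s : ℝ} (hc : 0 < c) (hsc : s ≤ c) :
    ∫ x in (0:ℝ)..s, max (1 - x / c) 0 = s - s ^ 2 / (2 * c) := by
  have hpos : EqOn (fun x => max (1 - x / c) 0) (fun x => 1 - x / c) (uIcc 0 s) := by
    intro x hx
    have hxc : x / c ≤ 1 := div_le_one_of_le₀ (hx.2.trans (max_le hc.le hsc)) hc.le
    exact max_eq_left (sub_nonneg.2 hxc)
  rw [integral_congr hpos, integral_sub intervalIntegrable_const
    (intervalIntegrable_id.div_const c), integral_const, integral_div, integral_id]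
  simp only [smul_eq_mul]
  ring

lemma integral_max_one_sub_div {c : ℝ} (hc : 0 < c) (s : ℝ) :
    ∫ x in (0:ℝ)..s, max (1 - x / c) 0 = s - s ^ 2 / (2 * c) + max (s - c) 0 ^ 2 / (2 * c) := by
  rcases le_or_gt s c with hsc | hcs
  · rw [integral_max_one_sub_div_of_le hc hsc, max_eq_right (by linarith)]
    ring
  have hint : ∀ a b : ℝ, IntervalIntegrable (fun x => max (1 - x / c) 0) MeasureTheory.volume a b :=
    fun a b => (by fun_prop : Continuous fun x : ℝ => max (1 - x / c) 0).intervalIntegrable a b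
  have hzero : ∫ x in c..s, max (1 - x / c) 0 = 0 := by
    refine (integral_congr fun x hx => ?_).trans integral_zero
    rw [uIcc_of_le hcs.le] at hx
    exact max_eq_right (sub_nonpos.2 ((one_le_div hc).2 hx.1))
  rw [← integral_add_adjacent_intervals (hint 0 c) (hint c s), hzero,
    integral_max_one_sub_div_of_le hc le_rfl, max_eq_left (by linarith)]
  field_simp
  ring

lemma mcp_eq {δ lam : ℝ} (hδ : 0 < δ) (hlam : 0 < lam) (t : ℝ) :
    mcp δ lam t = lam * |t| - t ^ 2 / (2 * δ) + max (|t| - δ * lam) 0 ^ 2 / (2 * δ) := by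
  rw [mcp, integral_max_one_sub_div (mul_pos hδ hlam), sq_abs]
  field_simp

lemma convexOn_univ_abs : ConvexOn ℝ univ fun t : ℝ => |t| :=
  convexOn_univ_norm.congr fun t _ => Real.norm_eq_abs t

lemma convexOn_univ_max_abs_sub_sq (a : ℝ) :
    ConvexOn ℝ univ fun t : ℝ => max (|t| - a) 0 ^ 2 := by
  have h : ConvexOn ℝ univ fun t : ℝ => max (|t| - a) 0 :=
    (convexOn_univ_abs.sub (concaveOn_const a convex_univ)).sup (convexOn_const 0 convex_univ)
  exact h.pow (fun _ _ => le_max_right _ _) 2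

theorem mcp_plus_quadratic_convex (δ lam ρ : ℝ) (hlam : 0 < lam) (hδ : 1 < δ)
    (hρ : 1 / δ < ρ) :
    ConvexOn ℝ Set.univ (fun t : ℝ => mcp δ lam t + ρ / 2 * t ^ 2) := by
  have hδ0 : 0 < δ := by linarith
  have hcoef : 0 ≤ ρ / 2 - 1 / (2 * δ) := by
    rw [div_lt_iff₀ hδ0] at hρ
    rw [sub_nonneg, div_le_div_iff₀ (by positivity) two_pos]
    linarith
  have hconv := ((convexOn_univ_abs.smul hlam.le).add (even_two.convexOn_pow.smul hcoef)).add
    ((convexOn_univ_max_abs_sub_sq (δ * lam)).smul (by positivity : 0 ≤ 1 / (2 * δ)))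
  refine hconv.congr fun t _ => ?_
  simp only [Pi.add_apply, smul_eq_mul, mcp_eq hδ0 hlam]
  ring
end

section
/- The efficiency gain of fusion: if S = S̃Π with Π a partition membership matrix of full column rank and V symmetric positive definite, then for any unit vector u in the fused parameter space, the asymptotic variance of the fused estimator satisfies u^T (S^T V^{-1} S)^{-1} u ≤ u^T Π^+ (S̃^T V^{-1} S̃)^{-1} (Π^+)^T u, where Π^+ = (Π^T Π)^{-1} Π^T; that is, the fused (oracle) estimator is at least as efficient as averaging the unfused estimators. -/
/-!
With `A = S̃ᵀ V⁻¹ S̃` the fused information matrix is `B = Πᵀ A Π`. For any left inverse `L`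
of `Π` (for instance `Π⁺`), the Gauss–Markov identity
`L A⁻¹ Lᵀ - B⁻¹ = (L - B⁻¹ Πᵀ A) A⁻¹ (L - B⁻¹ Πᵀ A)ᵀ`
exhibits the difference of the two covariance matrices as a congruence of the positive definite
`A⁻¹`, hence positive semidefinite.
-/

open Matrix

namespace Matrix

variable {m n K : Type*} [Fintype n]

lemma mulVec_injective_of_rank_eq_card [Field K] {A : Matrix m n K}
    (h : A.rank = Fintype.card n) : Function.Injective A.mulVec := by
  rw [mulVec_injective_iff, linearIndependent_iff_card_eq_finrank_span, ← h,
    rank_eq_finrank_span_cols]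
  rfl

variable [Fintype m] [DecidableEq m] [DecidableEq n]

lemma mul_inv_mul_conjTranspose_sub_inv_eq [Field K] [StarRing K] {A : Matrix m m K}
    {P : Matrix m n K} {L : Matrix n m K} (hA : A.IsHermitian) (hAdet : IsUnit A.det)
    (hBdet : IsUnit (Pᴴ * A * P).det) (hLP : L * P = 1) :
    L * A⁻¹ * Lᴴ - (Pᴴ * A * P)⁻¹ =
      (L - (Pᴴ * A * P)⁻¹ * Pᴴ * A) * A⁻¹ * (L - (Pᴴ * A * P)⁻¹ * Pᴴ * A)ᴴ := by
  set B := Pᴴ * A * P with hB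
  have hBh : B⁻¹ᴴ = B⁻¹ := (isHermitian_conjTranspose_mul_mul P hA).inv
  have hPL : Pᴴ * Lᴴ = 1 := by rw [← conjTranspose_mul, hLP, conjTranspose_one]
  have hKh : (B⁻¹ * Pᴴ * A)ᴴ = A * P * B⁻¹ := by
    simp only [conjTranspose_mul, hA.eq, hBh, conjTranspose_conjTranspose, Matrix.mul_assoc]
  have cross₁ : L * A⁻¹ * (A * P * B⁻¹) = B⁻¹ := by
    rw [Matrix.mul_assoc, ← Matrix.mul_assoc A⁻¹, ← Matrix.mul_assoc A⁻¹,
      nonsing_inv_mul _ hAdet, Matrix.one_mul, ← Matrix.mul_assoc, hLP, Matrix.one_mul]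
  have cross₂ : B⁻¹ * Pᴴ * A * A⁻¹ * Lᴴ = B⁻¹ := by
    rw [Matrix.mul_assoc _ A, mul_nonsing_inv _ hAdet, Matrix.mul_one, Matrix.mul_assoc, hPL,
      Matrix.mul_one]
  have diag : B⁻¹ * Pᴴ * A * A⁻¹ * (A * P * B⁻¹) = B⁻¹ := by
    rw [Matrix.mul_assoc _ A, mul_nonsing_inv _ hAdet, Matrix.mul_one]
    simp only [← Matrix.mul_assoc]
    rw [Matrix.mul_assoc B⁻¹ Pᴴ A, Matrix.mul_assoc B⁻¹ (Pᴴ * A) P, ← hB, nonsing_inv_mul _ hBdet,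
      Matrix.one_mul]
  rw [conjTranspose_sub, hKh, Matrix.sub_mul, Matrix.sub_mul, Matrix.mul_sub, Matrix.mul_sub,
    cross₁, cross₂, diag]
  abel

theorem PosDef.posSemidef_sub_inv_conjTranspose_mul_mul [Field K] [PartialOrder K] [StarRing K]
    [StarOrderedRing K] {A : Matrix m m K} {P : Matrix m n K} {L : Matrix n m K} (hA : A.PosDef)
    (hP : Function.Injective P.mulVec) (hLP : L * P = 1) :
    (L * A⁻¹ * Lᴴ - (Pᴴ * A * P)⁻¹).PosSemidef := by
  have hAdet : IsUnit A.det := (isUnit_iff_isUnit_det A).mp hA.isUnit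
  have hBdet : IsUnit (Pᴴ * A * P).det :=
    (isUnit_iff_isUnit_det _).mp (hA.conjTranspose_mul_mul_same hP).isUnit
  rw [mul_inv_mul_conjTranspose_sub_inv_eq hA.isHermitian hAdet hBdet hLP]
  exact hA.inv.posSemidef.mul_mul_conjTranspose_same _

end Matrix

theorem fusion_efficiency_general (d m p : ℕ)
    (St : Matrix (Fin d) (Fin m) ℝ) (hSt : St.rank = m)
    (Pi : Matrix (Fin m) (Fin p) ℝ) (hPi : Pi.rank = p)
    (V : Matrix (Fin d) (Fin d) ℝ) (hV : V.PosDef)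
    (u : Fin p → ℝ) :
    u ⬝ᵥ (((St * Pi)ᵀ * V⁻¹ * (St * Pi))⁻¹ *ᵥ u)
      ≤ u ⬝ᵥ ((((Piᵀ * Pi)⁻¹ * Piᵀ) * (Stᵀ * V⁻¹ * St)⁻¹ * ((Piᵀ * Pi)⁻¹ * Piᵀ)ᵀ) *ᵥ u) := by
  have hStInj := mulVec_injective_of_rank_eq_card (A := St) (by rw [hSt, Fintype.card_fin])
  have hPiInj := mulVec_injective_of_rank_eq_card (A := Pi) (by rw [hPi, Fintype.card_fin])
  have hA : (Stᵀ * V⁻¹ * St).PosDef := hV.inv.conjTranspose_mul_mul_same hStInj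
  have hPiPlus : (Piᵀ * Pi)⁻¹ * Piᵀ * Pi = 1 := by
    rw [Matrix.mul_assoc]
    exact nonsing_inv_mul _ ((isUnit_iff_isUnit_det _).mp
      (PosDef.conjTranspose_mul_self Pi hPiInj).isUnit)
  have hFused : (St * Pi)ᵀ * V⁻¹ * (St * Pi) = Piᵀ * (Stᵀ * V⁻¹ * St) * Pi := by
    simp only [transpose_mul, Matrix.mul_assoc]
  have hDiff := hA.posSemidef_sub_inv_conjTranspose_mul_mul hPiInj hPiPlus
  rw [conjTranspose_eq_transpose_of_trivial, conjTranspose_eq_transpose_of_trivial] at hDiff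
  have hQuad := hDiff.dotProduct_mulVec_nonneg u
  rw [star_trivial, sub_mulVec, dotProduct_sub, sub_nonneg] at hQuad
  rwa [hFused]

/-- Efficiency gain of fusion: the fused (oracle) estimator is at least as
    efficient as averaging the unfused estimators within partition sets, i.e.
    `uᵀ(SᵀV⁻¹S)⁻¹u ≤ uᵀ Π⁺ (S̃ᵀV⁻¹S̃)⁻¹ (Π⁺)ᵀ u` with
    `Π⁺ = (ΠᵀΠ)⁻¹Πᵀ`. -/
theorem fusion_efficiency (d m p : ℕ) (hpm : p ≤ m)
    (St : Matrix (Fin d) (Fin m) ℝ) (hSt : St.rank = m)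
    (Pi : Matrix (Fin m) (Fin p) ℝ) (hPi : Pi.rank = p)
    (V : Matrix (Fin d) (Fin d) ℝ) (hV : V.PosDef) (hVsym : V.IsSymm)
    (u : Fin p → ℝ) (hu : ∑ r, u r ^ 2 = 1) :
    u ⬝ᵥ (((St * Pi)ᵀ * V⁻¹ * (St * Pi))⁻¹ *ᵥ u)
      ≤ u ⬝ᵥ ((((Piᵀ * Pi)⁻¹ * Piᵀ) * (Stᵀ * V⁻¹ * St)⁻¹ * ((Piᵀ * Pi)⁻¹ * Piᵀ)ᵀ) *ᵥ u) :=
  fusion_efficiency_general d m p St hSt Pi hPi V hV u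
end
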